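/- If X is a nonempty Hausdorff topological space with no isolated points in which Player II has a winning strategy in the Choquet game, then X has cardinality at least 2^ℵ₀. -/
import Mathlib


/-- A strategy for Player II in the Choquet game: given the history of Player I's
moves `U₀,…,Uₙ` so far, produce an open set `Vₙ`. -/
def ChoquetStrategy (X : Type*) := List (Set X) → Set X

/-- The history of Player I's first `n+1` moves of a run `U`. -/
def choquetHist {X : Type*} (U : ℕ → Set X) (n : ℕ) : List (Set X) :=
  (List.range (n + 1)).map U

/-- `U` is a legal run of Player I's moves in the Choquet game against the strategy `τ`
of Player II: each `Uₙ` is nonempty open and `Uₙ₊₁` is contained in Player II's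
previous response. -/
def IsChoquetRun {X : Type*} [TopologicalSpace X] (τ : ChoquetStrategy X)
    (U : ℕ → Set X) : Prop :=
  (∀ n, IsOpen (U n) ∧ (U n).Nonempty) ∧
  (∀ n, U (n + 1) ⊆ τ (choquetHist U n))

/-- `τ` is a winning strategy for Player II in the Choquet game: it always responds to a
legal partial history `U₀,…,Uₙ` with a nonempty open subset of `Uₙ`, and in every legal
run the intersection `⋂ₙ Uₙ` is nonempty. -/
def IsChoquetWinning {X : Type*} [TopologicalSpace X] (τ : ChoquetStrategy X) : Prop :=
  (∀ U : ℕ → Set X, ∀ n : ℕ,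
      ((∀ m, m ≤ n → IsOpen (U m) ∧ (U m).Nonempty) ∧
       (∀ m, m < n → U (m + 1) ⊆ τ (choquetHist U m))) →
      IsOpen (τ (choquetHist U n)) ∧ (τ (choquetHist U n)).Nonempty ∧
        τ (choquetHist U n) ⊆ U n) ∧
  (∀ U : ℕ → Set X, IsChoquetRun τ U → (⋂ n, U n).Nonempty)

open Set

/-- In a T2 space with no isolated points, every nonempty open set contains two
disjoint nonempty open subsets. -/
lemma exists_disjoint_opens {X : Type*} [TopologicalSpace X] [T2Space X]
    (hiso : ∀ x : X, ¬ IsOpen ({x} : Set X)) {W : Set X} (hW : IsOpen W)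
    (hne : W.Nonempty) :
    ∃ A B : Set X, IsOpen A ∧ IsOpen B ∧ A.Nonempty ∧ B.Nonempty ∧ A ⊆ W ∧ B ⊆ W ∧
      Disjoint A B := by
  obtain ⟨a, ha⟩ := hne
  have h2 : ∃ b ∈ W, b ≠ a := by
    by_contra hcon
    push_neg at hcon
    have hWa : W = {a} := subset_antisymm (fun z hz => hcon z hz) (by simp [ha])
    exact hiso a (hWa ▸ hW)
  obtain ⟨b, hbW, hba⟩ := h2
  obtain ⟨Ua, Ub, hUa, hUb, haUa, hbUb, hdisj⟩ := t2_separation hba.symm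
  exact ⟨W ∩ Ua, W ∩ Ub, hW.inter hUa, hW.inter hUb, ⟨a, ha, haUa⟩, ⟨b, hbW, hbUb⟩,
    inter_subset_left, inter_subset_left,
    hdisj.mono inter_subset_right inter_subset_right⟩

open Classical in
/-- Pick one of two disjoint nonempty open subsets of `W` (when they exist). -/
noncomputable def choquetPick {X : Type*} [TopologicalSpace X] (W : Set X) (b : Bool) :
    Set X :=
  if h : ∃ A B : Set X, IsOpen A ∧ IsOpen B ∧ A.Nonempty ∧ B.Nonempty ∧ A ⊆ W ∧ B ⊆ W ∧
      Disjoint A B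
  then (if b then h.choose else h.choose_spec.choose)
  else W

lemma choquetPick_spec {X : Type*} [TopologicalSpace X] [T2Space X]
    (hiso : ∀ x : X, ¬ IsOpen ({x} : Set X)) {W : Set X} (hW : IsOpen W)
    (hne : W.Nonempty) (b : Bool) :
    IsOpen (choquetPick W b) ∧ (choquetPick W b).Nonempty ∧ choquetPick W b ⊆ W := by
  have h := exists_disjoint_opens hiso hW hne
  have hs := h.choose_spec.choose_spec
  rw [choquetPick]
  simp only [dif_pos h]
  cases b
  · exact ⟨hs.2.1, hs.2.2.2.1, hs.2.2.2.2.2.1⟩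
  · exact ⟨hs.1, hs.2.2.1, hs.2.2.2.2.1⟩

lemma choquetPick_disjoint {X : Type*} [TopologicalSpace X] [T2Space X]
    (hiso : ∀ x : X, ¬ IsOpen ({x} : Set X)) {W : Set X} (hW : IsOpen W)
    (hne : W.Nonempty) :
    Disjoint (choquetPick W true) (choquetPick W false) := by
  have h := exists_disjoint_opens hiso hW hne
  have hs := h.choose_spec.choose_spec
  rw [choquetPick, choquetPick]
  simp only [dif_pos h]
  exact hs.2.2.2.2.2.2

/-- The Cantor scheme: to each finite binary sequence (read backwards) associate
Player I's current move and the full history of Player I's moves so far. -/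
noncomputable def choquetAux {X : Type*} [TopologicalSpace X] (τ : ChoquetStrategy X) :
    List Bool → Set X × List (Set X)
  | [] => (Set.univ, [Set.univ])
  | b :: s =>
      (choquetPick (τ (choquetAux τ s).2) b,
        (choquetAux τ s).2 ++ [choquetPick (τ (choquetAux τ s).2) b])

/-- Reversed prefixes of a branch. -/
def choquetSeq (x : ℕ → Bool) : ℕ → List Bool
  | 0 => []
  | n + 1 => x n :: choquetSeq x n

/-- The run of Player I's moves along a branch `x`. -/
noncomputable def choquetRun {X : Type*} [TopologicalSpace X] (τ : ChoquetStrategy X)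
    (x : ℕ → Bool) (n : ℕ) : Set X :=
  (choquetAux τ (choquetSeq x n)).1

lemma choquetHist_succ {X : Type*} (U : ℕ → Set X) (n : ℕ) :
    choquetHist U (n + 1) = choquetHist U n ++ [U (n + 1)] := by
  simp [choquetHist, List.range_succ]

lemma choquetRun_hist {X : Type*} [TopologicalSpace X] (τ : ChoquetStrategy X)
    (x : ℕ → Bool) (n : ℕ) :
    choquetHist (choquetRun τ x) n = (choquetAux τ (choquetSeq x n)).2 := by
  induction n with
  | zero =>
      show List.map (choquetRun τ x) (List.range 1) = _
      rw [show List.range 1 = [0] from rfl]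
      simp [choquetRun, choquetSeq, choquetAux]
  | succ n ih =>
      rw [choquetHist_succ, ih]
      show _ = (choquetAux τ (x n :: choquetSeq x n)).2
      rw [choquetAux]
      rfl

/-- A nonempty Hausdorff space with no isolated points in which Player II has a winning
strategy in the Choquet game has cardinality at least `2^ℵ₀`. -/
theorem continuum_le_of_choquet {X : Type*} [TopologicalSpace X] [T2Space X] [Nonempty X]
    (hiso : ∀ x : X, ¬ IsOpen ({x} : Set X))
    (h : ∃ τ : ChoquetStrategy X, IsChoquetWinning τ) :
    Cardinal.continuum ≤ Cardinal.mk X := by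
  obtain ⟨τ, hwin⟩ := h
  obtain ⟨hwin1, hwin2⟩ := hwin
  -- Legality of the runs along branches
  have legal : ∀ (n : ℕ) (x : ℕ → Bool),
      (∀ m, m ≤ n → IsOpen (choquetRun τ x m) ∧ (choquetRun τ x m).Nonempty) ∧
      (∀ m, m < n → choquetRun τ x (m + 1) ⊆ τ (choquetHist (choquetRun τ x) m)) := by
    intro n
    induction n with
    | zero =>
        intro x
        constructor
        · intro m hm
          interval_cases m
          constructor
          · show IsOpen ((choquetAux τ (choquetSeq x 0)).1)
            simp [choquetSeq, choquetAux]
          · show ((choquetAux τ (choquetSeq x 0)).1).Nonempty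
            simp [choquetSeq, choquetAux, Set.univ_nonempty]
        · intro m hm
          exact absurd hm (Nat.not_lt_zero m)
    | succ n ih =>
        intro x
        have hprev := ih x
        have hres := hwin1 (choquetRun τ x) n hprev
        have hW : IsOpen (τ ((choquetAux τ (choquetSeq x n)).2)) ∧
            (τ ((choquetAux τ (choquetSeq x n)).2)).Nonempty := by
          rw [← choquetRun_hist]
          exact ⟨hres.1, hres.2.1⟩
        have hnext : choquetRun τ x (n + 1) =
            choquetPick (τ ((choquetAux τ (choquetSeq x n)).2)) (x n) := by
          show (choquetAux τ (x n :: choquetSeq x n)).1 = _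
          rw [choquetAux]
        have hpick := choquetPick_spec hiso hW.1 hW.2 (x n)
        constructor
        · intro m hm
          rcases Nat.lt_or_ge m (n + 1) with hm' | hm'
          · exact hprev.1 m (Nat.lt_succ_iff.mp hm')
          · have : m = n + 1 := le_antisymm hm hm'
            subst this
            rw [hnext]
            exact ⟨hpick.1, hpick.2.1⟩
        · intro m hm
          rcases Nat.lt_or_ge m n with hm' | hm'
          · exact hprev.2 m hm'
          · have : m = n := le_antisymm (Nat.lt_succ_iff.mp hm) hm'
            subst this
            rw [hnext, choquetRun_hist]
            exact hpick.2.2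
  -- Each branch is a legal run
  have hrun : ∀ x : ℕ → Bool, IsChoquetRun τ (choquetRun τ x) := by
    intro x
    constructor
    · intro n
      exact (legal n x).1 n le_rfl
    · intro n
      exact (legal (n + 1) x).2 n (Nat.lt_succ_self n)
  -- Choose a point in each branch's intersection
  have hpt : ∀ x : ℕ → Bool, ∃ p : X, ∀ n, p ∈ choquetRun τ x n := by
    intro x
    obtain ⟨p, hp⟩ := hwin2 (choquetRun τ x) (hrun x)
    exact ⟨p, fun n => Set.mem_iInter.mp hp n⟩
  choose f hf using hpt
  -- f is injective
  have hseq_eq : ∀ (x y : ℕ → Bool) (n : ℕ), (∀ m, m < n → x m = y m) →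
      choquetSeq x n = choquetSeq y n := by
    intro x y n
    induction n with
    | zero => intro _; rfl
    | succ n ih =>
        intro hxy
        show x n :: choquetSeq x n = y n :: choquetSeq y n
        rw [hxy n (Nat.lt_succ_self n), ih (fun m hm => hxy m (hm.trans (Nat.lt_succ_self n)))]
  have hinj : Function.Injective f := by
    intro x y hxy
    by_contra hne
    have hex : ∃ n, x n ≠ y n := by
      by_contra hcon
      push_neg at hcon
      exact hne (funext hcon)
    classical
    let n := Nat.find hex
    have hn : x n ≠ y n := Nat.find_spec hex
    have hmin : ∀ m, m < n → x m = y m := fun m hm => by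
      have := Nat.find_min hex hm
      simpa using this
    have hseq : choquetSeq x n = choquetSeq y n := hseq_eq x y n hmin
    -- the common response set
    have hres := hwin1 (choquetRun τ x) n (legal n x)
    have hW : IsOpen (τ ((choquetAux τ (choquetSeq x n)).2)) ∧
        (τ ((choquetAux τ (choquetSeq x n)).2)).Nonempty := by
      rw [← choquetRun_hist]
      exact ⟨hres.1, hres.2.1⟩
    set W := τ ((choquetAux τ (choquetSeq x n)).2) with hWdef
    have hx1 : choquetRun τ x (n + 1) = choquetPick W (x n) := by
      show (choquetAux τ (x n :: choquetSeq x n)).1 = _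
      rw [choquetAux]
    have hy1 : choquetRun τ y (n + 1) = choquetPick W (y n) := by
      show (choquetAux τ (y n :: choquetSeq y n)).1 = _
      rw [choquetAux, ← hseq]
    have hd := choquetPick_disjoint hiso hW.1 hW.2
    have hfx : f x ∈ choquetPick W (x n) := hx1 ▸ hf x (n + 1)
    have hfy : f y ∈ choquetPick W (y n) := hy1 ▸ hf y (n + 1)
    rw [hxy] at hfx
    have : f y ∈ choquetPick W true ∩ choquetPick W false := by
      cases hb : x n <;> cases hb' : y n
      · exact absurd (hb.trans hb'.symm) hn
      · rw [hb] at hfx; rw [hb'] at hfy; exact ⟨hfy, hfx⟩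
      · rw [hb] at hfx; rw [hb'] at hfy; exact ⟨hfx, hfy⟩
      · exact absurd (hb.trans hb'.symm) hn
    exact absurd this (by rw [Set.disjoint_iff_inter_eq_empty.mp hd]; exact notMem_empty _)
  -- conclude cardinality
  have hle : Cardinal.lift.{_, 0} (Cardinal.mk (ℕ → Bool)) ≤
      Cardinal.lift.{0} (Cardinal.mk X) :=
    Cardinal.lift_mk_le'.mpr ⟨⟨f, hinj⟩⟩
  have hmk : Cardinal.mk (ℕ → Bool) = Cardinal.continuum := by
    simp [Cardinal.mk_arrow, Cardinal.mk_bool, Cardinal.mk_nat,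
      Cardinal.two_power_aleph0]
  rw [hmk, Cardinal.lift_continuum] at hle
  simpa using hle
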